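/- arXiv:0811.0966 — 2 statements merged into one kernel-verified Lean document; each statement's English description precedes it below -/
import Mathlib

section
/- Let m and n be positive integers and suppose that for every 1 ≤ i ≤ n the number m+i is composite and m+i ∉ H_n. Then the binomial coefficient C(m+n, n) admits a Grimm factorization, i.e., there exist positive integers a_1, ..., a_n with C(m+n, n) = a_1 ⋯ a_n, a_i dividing m+i and a_i > 1 for each i, and gcd(a_i, a_j) = 1 for all i ≠ j. -/
/-!
By Kummer's theorem `v_p(C(m+n, n))` counts the levels `k` at which adding `m` and `n` in base `p`
carries, and a carry at level `k` yields a multiple of `p ^ k` in the window `m+1, …, m+n`. Hence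
`p ^ v_p(C(m+n, n))` divides the window term of largest `p`-adic valuation. Sending every prime
factor of the binomial coefficient to such a term and multiplying the prime powers sent to each
term gives pairwise coprime factors `a_i ∣ m + i` with product `C(m+n, n)`. When `m + i ∉ H_n`,
some prime power `p ^ v_p(m+i) > n` exactly divides `m + i`: it divides no other window term, so
`p` is sent to `i`, and it forces a carry, so `p` divides the binomial coefficient and `a_i > 1`.
-/

def Hset (n : ℕ) : Set ℕ :=
  {x | 1 < x ∧ ¬ x.Prime ∧ ∀ p : ℕ, p.Prime → p ∣ x → p ^ (x.factorization p) ≤ n}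

open Finset Nat

theorem exists_prime_pow_factorization_gt_of_not_mem_Hset {n x : ℕ} (hx : 1 < x)
    (hxp : ¬ x.Prime) (hH : x ∉ Hset n) : ∃ p, p.Prime ∧ n < p ^ x.factorization p := by
  by_contra! hle
  exact hH ⟨hx, hxp, fun p hp _ => hle p hp⟩

namespace Nat

variable {p m n : ℕ}

theorem exists_dvd_add_of_le_mod_add_mod {q : ℕ} (hq : 0 < q) (h : q ≤ n % q + m % q) :
    ∃ j ∈ Icc 1 n, q ∣ m + j := by
  have hmq := mod_lt m hq
  have hnq := mod_le n q
  refine ⟨q - m % q, mem_Icc.2 ⟨by omega, by omega⟩, ?_⟩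
  have := div_add_mod m q
  exact ⟨m / q + 1, by rw [mul_add, mul_one]; omega⟩

theorem le_mod_add_mod_of_dvd_add {q j : ℕ} (hn : n < q) (hj : j ∈ Icc 1 n)
    (h : q ∣ m + j) : q ≤ n % q + m % q := by
  have hj := mem_Icc.1 hj
  have hmj : q ∣ m % q + j := by
    rwa [Nat.dvd_iff_mod_eq_zero, add_mod, mod_mod, ← add_mod, ← Nat.dvd_iff_mod_eq_zero]
  have := le_of_dvd (by omega) hmj
  rw [mod_eq_of_lt hn]
  omega

theorem eq_of_dvd_add_of_dvd_add {q i j : ℕ} (hn : n < q) (hi : i ∈ Icc 1 n)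
    (hj : j ∈ Icc 1 n) (hqi : q ∣ m + i) (hqj : q ∣ m + j) : i = j := by
  have hmod : i ≡ j [MOD q] :=
    ((modEq_zero_iff_dvd.2 hqi).trans (modEq_zero_iff_dvd.2 hqj).symm).add_left_cancel' m
  exact hmod.eq_of_lt_of_lt (by grind) (by grind)

theorem factorization_choose_add_eq_card (hp : p.Prime) :
    ((m + n).choose n).factorization p =
      #{k ∈ Ico 1 (m + n + 1) | p ^ k ≤ n % p ^ k + m % p ^ k} := by
  have := Fact.mk hp
  rw [factorization_def _ hp]
  exact padicValNat_choose' ((log_le_self p _).trans_lt (lt_succ_self _))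

theorem factorization_choose_add_le (hp : p.Prime) {t : ℕ}
    (h : ∀ k, p ^ k ≤ n % p ^ k + m % p ^ k → k ≤ t) :
    ((m + n).choose n).factorization p ≤ t := by
  rw [factorization_choose_add_eq_card hp]
  calc _ ≤ #(Ico 1 (t + 1)) := card_le_card fun k hk => by
          simp only [mem_filter, mem_Ico] at hk ⊢
          exact ⟨hk.1.1, lt_succ_of_le (h k hk.2)⟩
    _ = t := by simp

theorem pow_factorization_choose_add_dvd (hp : p.Prime) {j : ℕ} (hj : j ∈ Icc 1 n)
    (hmax : ∀ k ∈ Icc 1 n, (m + k).factorization p ≤ (m + j).factorization p) :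
    p ^ ((m + n).choose n).factorization p ∣ m + j := by
  rw [hp.pow_dvd_iff_le_factorization (by grind)]
  refine factorization_choose_add_le hp fun k hk => ?_
  obtain ⟨i, hi, hdvd⟩ := exists_dvd_add_of_le_mod_add_mod (pow_pos hp.pos k) hk
  exact ((hp.pow_dvd_iff_le_factorization (by grind)).1 hdvd).trans (hmax i hi)

theorem prime_dvd_choose_add (hp : p.Prime) {i e : ℕ} (hi : i ∈ Icc 1 n) (hn : n < p ^ e)
    (hdvd : p ^ e ∣ m + i) : p ∣ (m + n).choose n := by
  have he : e ∈ Ico 1 (m + n + 1) := by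
    have : e ≠ 0 := by rintro rfl; grind
    have : e < p ^ e := Nat.lt_pow_self hp.one_lt
    have := le_of_dvd (by grind) hdvd
    grind
  rw [hp.dvd_iff_one_le_factorization (choose_pos (le_add_left n m)).ne',
    factorization_choose_add_eq_card hp, one_le_card]
  exact ⟨e, mem_filter.2 ⟨he, le_mod_add_mod_of_dvd_add hn hi hdvd⟩⟩

end Nat

def fiberPart (N : ℕ) (g : ℕ → ℕ) (i : ℕ) : ℕ :=
  ∏ p ∈ N.primeFactors with g p = i, p ^ N.factorization p

section fiberPart

variable {N : ℕ} {g : ℕ → ℕ}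

theorem coprime_pow_factorization {p q : ℕ} (hp : p ∈ N.primeFactors)
    (hq : q ∈ N.primeFactors) (hpq : p ≠ q) :
    Coprime (p ^ N.factorization p) (q ^ N.factorization q) :=
  coprime_pow_primes _ _ (prime_of_mem_primeFactors hp) (prime_of_mem_primeFactors hq) hpq

theorem prod_fiberPart {s : Finset ℕ} (hN : N ≠ 0) (hg : ∀ p ∈ N.primeFactors, g p ∈ s) :
    ∏ i ∈ s, fiberPart N g i = N := by
  unfold fiberPart
  rw [Finset.prod_fiberwise_of_maps_to hg]
  conv_rhs => rw [← prod_factorization_pow_eq_self hN]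
  rfl

theorem fiberPart_dvd {i x : ℕ}
    (h : ∀ p ∈ N.primeFactors, g p = i → p ^ N.factorization p ∣ x) :
    fiberPart N g i ∣ x :=
  Finset.prod_dvd_of_isRelPrime
    (fun _ hp _ hq hpq => coprime_iff_isRelPrime.1 <|
      coprime_pow_factorization (mem_filter.1 hp).1 (mem_filter.1 hq).1 hpq)
    fun p hp => h p (mem_filter.1 hp).1 (mem_filter.1 hp).2

theorem coprime_fiberPart {i j : ℕ} (hij : i ≠ j) :
    Coprime (fiberPart N g i) (fiberPart N g j) :=
  Coprime.prod_left fun _ hp => Coprime.prod_right fun _ hq =>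
    coprime_pow_factorization (mem_filter.1 hp).1 (mem_filter.1 hq).1 fun hpq =>
      hij ((mem_filter.1 hp).2.symm.trans (hpq ▸ (mem_filter.1 hq).2))

theorem one_lt_fiberPart {p : ℕ} (hp : p ∈ N.primeFactors) : 1 < fiberPart N g (g p) :=
  calc 1 < p ^ N.factorization p :=
        one_lt_pow (Finsupp.mem_support_iff.1 (support_factorization N ▸ hp))
          (prime_of_mem_primeFactors hp).one_lt
    _ ≤ fiberPart N g (g p) :=
        single_le_prod' (fun _ hq => one_le_pow _ _ (pos_of_mem_primeFactors (mem_filter.1 hq).1))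
          (mem_filter.2 ⟨hp, rfl⟩)

end fiberPart

theorem grimm_factorization_of_not_mem_Hset_general
    (m n : ℕ) (hn : 0 < n)
    (h : ∀ i ∈ Finset.Icc 1 n, (1 < m + i ∧ ¬ (m + i).Prime) ∧ m + i ∉ Hset n) :
    ∃ a : ℕ → ℕ,
      Nat.choose (m + n) n = ∏ i ∈ Finset.Icc 1 n, a i ∧
      (∀ i ∈ Finset.Icc 1 n, a i ∣ (m + i) ∧ 1 < a i) ∧
      (∀ i ∈ Finset.Icc 1 n, ∀ j ∈ Finset.Icc 1 n, i ≠ j →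
        Nat.Coprime (a i) (a j)) := by
  choose g hg using fun p =>
    exists_max_image (Icc 1 n) (fun k => (m + k).factorization p) (nonempty_Icc.2 hn)
  set N := (m + n).choose n
  have hN : N ≠ 0 := (choose_pos (le_add_left n m)).ne'
  have hfiber : ∀ i ∈ Icc 1 n, ∃ p ∈ N.primeFactors, g p = i := by
    intro i hi
    obtain ⟨⟨hi1, hiprime⟩, hiH⟩ := h i hi
    obtain ⟨p, hp, hlt⟩ := exists_prime_pow_factorization_gt_of_not_mem_Hset hi1 hiprime hiH
    have hdvd := ordProj_dvd (m + i) p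
    have hdvd_max : p ^ (m + i).factorization p ∣ m + g p :=
      (pow_dvd_pow p ((hg p).2 i hi)).trans (ordProj_dvd _ _)
    exact ⟨p, mem_primeFactors.2 ⟨hp, prime_dvd_choose_add hp hi hlt hdvd, hN⟩,
      eq_of_dvd_add_of_dvd_add hlt (hg p).1 hi hdvd_max hdvd⟩
  refine ⟨fiberPart N g, (prod_fiberPart hN fun p _ => (hg p).1).symm, fun i hi => ⟨?_, ?_⟩,
    fun i _ j _ => coprime_fiberPart⟩
  · refine fiberPart_dvd fun p hp hpi => hpi ▸ ?_
    exact pow_factorization_choose_add_dvd (prime_of_mem_primeFactors hp) (hg p).1 (hg p).2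
  · obtain ⟨p, hp, rfl⟩ := hfiber i hi
    exact one_lt_fiberPart hp

/-- **Lemma 3.** If for every `1 ≤ i ≤ n` the number `m+i` is composite and
`m+i ∉ H_n`, then `C(m+n, n)` admits a Grimm factorization. -/
theorem grimm_factorization_of_not_mem_Hset
    (m n : ℕ) (hm : 0 < m) (hn : 0 < n)
    (h : ∀ i ∈ Finset.Icc 1 n, (1 < m + i ∧ ¬ (m + i).Prime) ∧ m + i ∉ Hset n) :
    ∃ a : ℕ → ℕ,
      Nat.choose (m + n) n = ∏ i ∈ Finset.Icc 1 n, a i ∧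
      (∀ i ∈ Finset.Icc 1 n, a i ∣ (m + i) ∧ 1 < a i) ∧
      (∀ i ∈ Finset.Icc 1 n, ∀ j ∈ Finset.Icc 1 n, i ≠ j →
        Nat.Coprime (a i) (a j)) :=
  grimm_factorization_of_not_mem_Hset_general m n hn h
end

section
/- Assume Conjecture 1: there exists N such that for every n ≥ N and every positive integer m, if m+1, ..., m+n are all composite then ∏_{i=1}^n (m+i) = n! · ∏_{i=1}^n a_i for some positive integers a_1, ..., a_n with a_i dividing m+i, a_i > 1 for each i, and gcd(a_i, a_j) = 1 for all i ≠ j. Then there exists N' such that for every n ≥ N' and every divisor d > 1 of ∏_{n < p < 2n, p prime} p, there is a prime in the interval (d − n, d + n]. -/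
/-- **Conjecture 1.** For all sufficiently large `n`, the product of any `n`
consecutive composite numbers `m+1, ..., m+n` can be written as
`n! · a_1 ⋯ a_n` with `a_i ∣ m+i`, `a_i > 1`, and the `a_i` pairwise coprime. -/
def Conjecture1 : Prop :=
  ∃ N : ℕ, ∀ n : ℕ, N ≤ n → ∀ m : ℕ, 0 < m →
    (∀ i ∈ Finset.Icc 1 n, 1 < m + i ∧ ¬ (m + i).Prime) →
    ∃ a : ℕ → ℕ,
      (∏ i ∈ Finset.Icc 1 n, (m + i)) =
        Nat.factorial n * ∏ i ∈ Finset.Icc 1 n, a i ∧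
      (∀ i ∈ Finset.Icc 1 n, a i ∣ (m + i) ∧ 1 < a i) ∧
      (∀ i ∈ Finset.Icc 1 n, ∀ j ∈ Finset.Icc 1 n, i ≠ j →
        Nat.Coprime (a i) (a j))

/-! Suppose no prime lies in `(d - n, d + n]`. Then the `2n` numbers `m + 1, …, m + 2n` with
`m = d - n` are composite, and Conjecture 1 writes their product as `(2n)! · a_1 ⋯ a_{2n}`.
Any prime `q ∣ a_n` divides `m + n = d`, so `n < q < 2n`; hence `q` divides `(2n)!` as well
and `q²` divides the product. But `q > n` divides no other `m + i` in the window, and `q² ∤ d`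
because `d` is squarefree: a contradiction. -/

open Finset

theorem squarefree_prod_of_forall_prime {s : Finset ℕ} (hs : ∀ p ∈ s, p.Prime) :
    Squarefree (∏ p ∈ s, p) :=
  squarefree_prod_of_pairwise_isCoprime
    (fun p hp r hr hpr =>
      Nat.coprime_iff_isRelPrime.1 ((Nat.coprime_primes (hs p hp) (hs r hr)).2 hpr))
    fun p hp => (hs p hp).prime.squarefree

theorem Nat.Prime.mem_of_dvd_prod_primes {s : Finset ℕ} (hs : ∀ p ∈ s, p.Prime) {q : ℕ}
    (hq : q.Prime) (h : q ∣ ∏ p ∈ s, p) : q ∈ s := by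
  obtain ⟨p, hp, hqp⟩ := (Prime.dvd_finsetProd_iff hq.prime _).1 h
  rwa [(Nat.prime_dvd_prime_iff_eq hq (hs p hp)).1 hqp]

theorem Nat.Prime.not_sq_dvd_prod {ι : Type*} [DecidableEq ι] {s : Finset ι} {f : ι → ℕ}
    {q : ℕ} {j : ι} (hq : q.Prime) (hj : j ∈ s) (hfj : ¬ q ^ 2 ∣ f j)
    (hf : ∀ i ∈ s, i ≠ j → ¬ q ∣ f i) :
    ¬ q ^ 2 ∣ ∏ i ∈ s, f i := by
  have hcop : Nat.Coprime (q ^ 2) (∏ i ∈ s.erase j, f i) :=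
    Nat.Coprime.pow_left 2 <| Nat.Coprime.prod_right fun i hi =>
      (Nat.Prime.coprime_iff_not_dvd hq).2 (hf i (mem_of_mem_erase hi) (ne_of_mem_erase hi))
  rw [← mul_prod_erase s f hj]
  exact fun h => hfj (hcop.dvd_of_dvd_mul_right h)

theorem Nat.eq_of_dvd_add_of_dvd_add_s14 {q m i j : ℕ} (hi : q ∣ m + i) (hj : q ∣ m + j)
    (hij : |(j : ℤ) - i| < q) : i = j :=
  ((Nat.modEq_zero_iff_dvd.2 hi).trans (Nat.modEq_zero_iff_dvd.2 hj).symm).add_left_cancel'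
    m |>.eq_of_abs_lt hij

theorem not_sq_dvd_prod_Icc_add {q m k j : ℕ} (hq : q.Prime) (hj : j ∈ Icc 1 k)
    (hqj : q ∣ m + j) (hsq : ¬ q ^ 2 ∣ m + j) (hk : k < j + q) (hjq : j ≤ q) :
    ¬ q ^ 2 ∣ ∏ i ∈ Icc 1 k, (m + i) := by
  refine hq.not_sq_dvd_prod hj hsq fun i hi hij hqi => hij ?_
  have := mem_Icc.1 hi
  exact Nat.eq_of_dvd_add_of_dvd_add_s14 hqi hqj (abs_sub_lt_iff.2 ⟨by omega, by omega⟩)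

/-- Assuming Conjecture 1, for all sufficiently large `n`, every divisor `d > 1`
of `∏_{n < p < 2n} p` has a prime in the interval `(d − n, d + n]`. -/
theorem exists_prime_near_divisor_of_conjecture1 (hC : Conjecture1) :
    ∃ N' : ℕ, ∀ n : ℕ, N' ≤ n → ∀ d : ℕ, 1 < d →
      d ∣ (∏ p ∈ Finset.filter Nat.Prime (Finset.Ioo n (2 * n)), p) →
      ∃ p : ℕ, p.Prime ∧ d - n < p ∧ p ≤ d + n := by
  obtain ⟨N, hN⟩ := hC
  refine ⟨N, fun n hn d hd hdvd => ?_⟩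
  have hS : ∀ p ∈ filter Nat.Prime (Ioo n (2 * n)), p.Prime := fun p hp => (mem_filter.1 hp).2
  have hfac : ∀ q, q.Prime → q ∣ d → n < q ∧ q < 2 * n := fun q hq hqd =>
    mem_Ioo.1 (mem_filter.1 (hq.mem_of_dvd_prod_primes hS (hqd.trans hdvd))).1
  have hsq : Squarefree d := (squarefree_prod_of_forall_prime hS).squarefree_of_dvd hdvd
  obtain ⟨hn_lt, hlt_two_n⟩ := hfac _ (Nat.minFac_prime hd.ne') d.minFac_dvd
  have hnd : n < d := hn_lt.trans_le (Nat.minFac_le (by omega))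
  have hn : n ∈ Icc 1 (2 * n) := mem_Icc.2 ⟨by omega, by omega⟩
  by_contra! hno
  have hcomp : ∀ i ∈ Icc 1 (2 * n), 1 < d - n + i ∧ ¬ (d - n + i).Prime := fun i hi => by
    have := mem_Icc.1 hi
    exact ⟨by omega, fun hp => by have := hno _ hp (by omega); omega⟩
  obtain ⟨a, hprod, ha, -⟩ := hN (2 * n) (by omega) (d - n) (by omega) hcomp
  obtain ⟨han, ha1⟩ := ha n hn
  set q := (a n).minFac
  have hq : q.Prime := Nat.minFac_prime ha1.ne'
  have hmn : d - n + n = d := by omega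
  have hqd : q ∣ d - n + n := (a n).minFac_dvd.trans han
  obtain ⟨hnq, hq2n⟩ := hfac q hq (hmn ▸ hqd)
  have hsqd : ¬ q ^ 2 ∣ d - n + n := fun h =>
    hq.prime.not_isUnit (hsq q (by rwa [← sq, ← hmn]))
  refine not_sq_dvd_prod_Icc_add hq hn hqd hsqd (by omega) hnq.le ?_
  rw [hprod, sq]
  exact mul_dvd_mul (Nat.dvd_factorial hq.pos hq2n.le)
    ((a n).minFac_dvd.trans (dvd_prod_of_mem a hn))
end
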